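/- arXiv:1401.0674 — 5 statements merged into one kernel-verified Lean document; each statement's English description precedes it below -/
import Mathlib

section
/- Let p ∈ [1,∞), let ρ : ℝ^N → ℝ be continuous and strictly positive with ∫_{ℝ^N} ρ(x) dx = 1, and suppose K > 0 satisfies sup{ρ(x) : |x−y| ≤ 1} ≤ K ρ(y) for every y ∈ ℝ^N. Let φ : ℝ^N → ℝ be measurable, integrable, and supported in the closed unit ball. Then for every u ∈ L^p(ℝ^N, ρ) one has ‖φ*u‖_{L^p(ℝ^N,ρ)} ≤ K^{1/p} ‖φ‖_{L^1(ℝ^N)} ‖u‖_{L^p(ℝ^N,ρ)}. (In particular this applies to each partial derivative ∂_i J of a C¹ kernel J supported in the unit ball.) -/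
open MeasureTheory Set
open scoped ENNReal

noncomputable section

abbrev Euc (N : ℕ) := EuclideanSpace ℝ (Fin N)

/-- Weighted `L^p` norm `(∫ ρ |u|^p)^{1/p}`. -/
def wnorm {N : ℕ} (p : ℝ) (ρ u : Euc N → ℝ) : ℝ :=
  (∫ x, ρ x * |u x| ^ p) ^ (1 / p)

/-- Convolution `(J*u)(x) = ∫ J(x-y) u(y) dy`. -/
def conv {N : ℕ} (J u : Euc N → ℝ) (x : Euc N) : ℝ :=
  ∫ y, J (x - y) * u y

/-! Hölder's inequality for the measure `|φ(x - y)| dy` gives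
`|φ * u|(x)^p ≤ ‖φ‖₁^(p-1) ∫ |φ(x - y)| |u(y)|^p dy`. Integrating against `ρ` and exchanging the
integrals leaves `∫ ρ(x) |φ(x - y)| dx`, in which only points with `|x - y| ≤ 1` contribute, so it
is at most `K ρ(y) ‖φ‖₁`. Hence `‖φ * u‖^p ≤ K ‖φ‖₁^p ‖u‖^p`. Working with `ℝ≥0∞`-valued
integrals avoids integrability side conditions until the final passage back to `ℝ`. -/

theorem ENNReal.lintegral_mul_rpow_le {α : Type*} [MeasurableSpace α] {μ : Measure α}
    {f g : α → ℝ≥0∞} (hf : AEMeasurable f μ) (hg : AEMeasurable g μ) {p : ℝ} (hp : 1 ≤ p) :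
    (∫⁻ a, f a * g a ∂μ) ^ p ≤ (∫⁻ a, f a ∂μ) ^ (p - 1) * ∫⁻ a, f a * g a ^ p ∂μ := by
  have hp0 : 0 < p := by linarith
  have hq : 0 ≤ 1 - 1 / p := by rw [sub_nonneg, div_le_one hp0]; exact hp
  have hsplit : ∀ a, f a ^ (1 - 1 / p) * (f a * g a ^ p) ^ (1 / p) = f a * g a := fun a => by
    rw [ENNReal.mul_rpow_of_nonneg _ _ (by positivity), ← ENNReal.rpow_mul,
      mul_one_div_cancel hp0.ne', ENNReal.rpow_one, ← mul_assoc,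
      ← ENNReal.rpow_add_of_nonneg _ _ hq (by positivity),
      sub_add_cancel, ENNReal.rpow_one]
  have holder := ENNReal.lintegral_mul_norm_pow_le hf (hf.mul (hg.pow_const p))
    (p := 1 - 1 / p) (q := 1 / p) hq (by positivity) (sub_add_cancel _ _)
  simp only [Pi.mul_apply, hsplit] at holder
  calc (∫⁻ a, f a * g a ∂μ) ^ p
      ≤ ((∫⁻ a, f a ∂μ) ^ (1 - 1 / p) * (∫⁻ a, f a * g a ^ p ∂μ) ^ (1 / p)) ^ p := by gcongr
    _ = (∫⁻ a, f a ∂μ) ^ (p - 1) * ∫⁻ a, f a * g a ^ p ∂μ := by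
      rw [ENNReal.mul_rpow_of_nonneg _ _ hp0.le, ← ENNReal.rpow_mul, ← ENNReal.rpow_mul,
        sub_mul, one_div_mul_cancel hp0.ne', one_mul, ENNReal.rpow_one]

section WeightedYoung

variable {G : Type*} [MeasurableSpace G] [AddCommGroup G] [MeasurableAdd₂ G] [MeasurableNeg G]
  {μ : Measure G} [μ.IsAddLeftInvariant]

theorem lintegral_mul_sub_le_mul_lintegral {R Φ : G → ℝ≥0∞} (hΦ : Measurable Φ) {K : ℝ≥0∞}
    (hRK : ∀ x y, Φ (x - y) ≠ 0 → R x ≤ K * R y) (y : G) :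
    ∫⁻ x, R x * Φ (x - y) ∂μ ≤ K * R y * ∫⁻ x, Φ x ∂μ := by
  calc ∫⁻ x, R x * Φ (x - y) ∂μ ≤ ∫⁻ x, K * R y * Φ (x - y) ∂μ := by
        refine lintegral_mono fun x => ?_
        by_cases hx : Φ (x - y) = 0
        · simp [hx]
        · exact mul_le_mul_left (hRK x y hx) _
    _ = K * R y * ∫⁻ x, Φ x ∂μ := by
        rw [lintegral_const_mul _ (by fun_prop), lintegral_sub_right_eq_self]

variable [SFinite μ] [μ.IsNegInvariant]

theorem lintegral_mul_lintegral_sub_mul_rpow_le {R Φ U : G → ℝ≥0∞} (hR : Measurable R)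
    (hΦ : Measurable Φ) (hU : Measurable U) {K : ℝ≥0∞}
    (hRK : ∀ x y, Φ (x - y) ≠ 0 → R x ≤ K * R y) {p : ℝ} (hp : 1 ≤ p) :
    ∫⁻ x, R x * (∫⁻ y, Φ (x - y) * U y ∂μ) ^ p ∂μ ≤
      K * (∫⁻ x, Φ x ∂μ) ^ p * ∫⁻ x, R x * U x ^ p ∂μ := by
  set T := ∫⁻ x, Φ x ∂μ
  calc ∫⁻ x, R x * (∫⁻ y, Φ (x - y) * U y ∂μ) ^ p ∂μ
      ≤ ∫⁻ x, R x * (T ^ (p - 1) * ∫⁻ y, Φ (x - y) * U y ^ p ∂μ) ∂μ := by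
        refine lintegral_mono fun x => mul_le_mul_right ?_ _
        have h := ENNReal.lintegral_mul_rpow_le (μ := μ) (f := fun y => Φ (x - y)) (g := U)
          (by fun_prop) (by fun_prop) hp
        rwa [lintegral_sub_left_eq_self] at h
    _ = T ^ (p - 1) * ∫⁻ x, ∫⁻ y, R x * (Φ (x - y) * U y ^ p) ∂μ ∂μ := by
        rw [← lintegral_const_mul _ (by fun_prop)]
        refine lintegral_congr fun x => ?_
        rw [lintegral_const_mul _ (by fun_prop), mul_left_comm]
    _ = T ^ (p - 1) * ∫⁻ y, (∫⁻ x, R x * Φ (x - y) ∂μ) * U y ^ p ∂μ := by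
        rw [lintegral_lintegral_swap (by fun_prop)]
        congr 1
        refine lintegral_congr fun y => ?_
        rw [← lintegral_mul_const _ (by fun_prop)]
        simp only [mul_assoc]
    _ ≤ T ^ (p - 1) * ∫⁻ y, K * R y * T * U y ^ p ∂μ := by
        gcongr with y
        exact lintegral_mul_sub_le_mul_lintegral hΦ hRK y
    _ = K * T ^ p * ∫⁻ x, R x * U x ^ p ∂μ := by
        have hTp : T ^ p = T ^ (p - 1) * T := by
          calc T ^ p = T ^ (p - 1 + 1) := by rw [sub_add_cancel]
            _ = T ^ (p - 1) * T := by
              rw [ENNReal.rpow_add_of_nonneg _ _ (by linarith) zero_le_one, ENNReal.rpow_one]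
        have hreorder : ∀ y, K * R y * T * U y ^ p = K * T * (R y * U y ^ p) := fun y => by ring
        simp_rw [hreorder]
        rw [lintegral_const_mul _ (by fun_prop), hTp]
        ring

end WeightedYoung

theorem ENNReal.ofReal_mul_abs_rpow {r : ℝ} (hr : 0 ≤ r) (a : ℝ) {p : ℝ} (hp : 0 ≤ p) :
    ENNReal.ofReal (r * |a| ^ p) = ENNReal.ofReal r * ‖a‖ₑ ^ p := by
  rw [ENNReal.ofReal_mul hr, ← ENNReal.ofReal_rpow_of_nonneg (abs_nonneg a) hp,
    Real.enorm_eq_ofReal_abs]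

theorem wnorm_eq_toReal_lintegral {N : ℕ} {p : ℝ} (hp : 0 ≤ p) {ρ v : Euc N → ℝ}
    (hρ : Measurable ρ) (hρ0 : ∀ x, 0 ≤ ρ x) (hv : Measurable v) :
    wnorm p ρ v = (∫⁻ x, ENNReal.ofReal (ρ x) * ‖v x‖ₑ ^ p).toReal ^ (1 / p) := by
  rw [wnorm, integral_eq_lintegral_of_nonneg_ae
    (ae_of_all _ fun x => mul_nonneg (hρ0 x) (by positivity)) (by fun_prop)]
  simp_rw [ENNReal.ofReal_mul_abs_rpow (hρ0 _) _ hp]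

theorem enorm_conv_le {N : ℕ} (φ u : Euc N → ℝ) (x : Euc N) :
    ‖conv φ u x‖ₑ ≤ ∫⁻ y, ‖φ (x - y)‖ₑ * ‖u y‖ₑ := by
  simpa only [conv, enorm_mul] using enorm_integral_le_lintegral_enorm fun y => φ (x - y) * u y

theorem measurable_conv {N : ℕ} {φ u : Euc N → ℝ} (hφ : Measurable φ) (hu : Measurable u) :
    Measurable (conv φ u) :=
  (((hφ.comp measurable_sub).mul (hu.comp measurable_snd)).stronglyMeasurable
    |>.integral_prod_right').measurable

theorem stmt1_general {N : ℕ} (p : ℝ) (hp : 1 ≤ p)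
    (ρ : Euc N → ℝ) (hρc : Continuous ρ) (hρpos : ∀ x, 0 < ρ x)
    (K : ℝ) (hK : 0 < K) (hKρ : ∀ y x : Euc N, ‖x - y‖ ≤ 1 → ρ x ≤ K * ρ y)
    (φ : Euc N → ℝ) (hφm : Measurable φ) (hφi : Integrable φ)
    (hφsupp : ∀ x : Euc N, 1 < ‖x‖ → φ x = 0)
    (u : Euc N → ℝ) (hum : Measurable u)
    (hu : Integrable fun x => ρ x * |u x| ^ p) :
    wnorm p ρ (conv φ u) ≤ K ^ (1 / p) * (∫ x, |φ x|) * wnorm p ρ u := by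
  have hp0 : 0 < p := by linarith
  have hρ0 : ∀ x, 0 ≤ ρ x := fun x => (hρpos x).le
  set R : Euc N → ℝ≥0∞ := fun x => ENNReal.ofReal (ρ x)
  set T := ∫⁻ x, ‖φ x‖ₑ
  set M := ∫⁻ x, R x * ‖u x‖ₑ ^ p
  have hT : T ≠ ∞ := hφi.2.ne
  have hM : M ≠ ∞ := by
    simpa only [ENNReal.ofReal_mul_abs_rpow (hρ0 _) _ hp0.le] using hu.lintegral_lt_top.ne
  have hRK : ∀ x y, ‖φ (x - y)‖ₑ ≠ 0 → R x ≤ ENNReal.ofReal K * R y := fun x y hxy => by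
    rw [← ENNReal.ofReal_mul hK.le]
    refine ENNReal.ofReal_le_ofReal (hKρ y x (not_lt.1 fun h => hxy ?_))
    simp [hφsupp _ h]
  have hL : ∫⁻ x, R x * ‖conv φ u x‖ₑ ^ p ≤ ENNReal.ofReal K * T ^ p * M :=
    (lintegral_mono fun x => by gcongr; exact enorm_conv_le φ u x).trans
      (lintegral_mul_lintegral_sub_mul_rpow_le (by fun_prop) (by fun_prop) (by fun_prop) hRK hp)
  have hTint : ∫ x, |φ x| = T.toReal := by
    simp_rw [← Real.norm_eq_abs]
    exact integral_norm_eq_lintegral_enorm hφm.aestronglyMeasurable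
  rw [wnorm_eq_toReal_lintegral hp0.le hρc.measurable hρ0 (measurable_conv hφm hum),
    wnorm_eq_toReal_lintegral hp0.le hρc.measurable hρ0 hum, hTint]
  calc _ ≤ (ENNReal.ofReal K * T ^ p * M).toReal ^ (1 / p) := by
        gcongr
        finiteness
    _ = K ^ (1 / p) * T.toReal * M.toReal ^ (1 / p) := by
        rw [ENNReal.toReal_mul, ENNReal.toReal_mul, ENNReal.toReal_ofReal hK.le,
          ← ENNReal.toReal_rpow, Real.mul_rpow (by positivity) (by positivity),
          Real.mul_rpow hK.le (by positivity), ← Real.rpow_mul (by positivity),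
          mul_one_div_cancel hp0.ne', Real.rpow_one]

theorem stmt1 {N : ℕ} (p : ℝ) (hp : 1 ≤ p)
    (ρ : Euc N → ℝ) (hρc : Continuous ρ) (hρpos : ∀ x, 0 < ρ x) (hρ1 : ∫ x, ρ x = 1)
    (K : ℝ) (hK : 0 < K) (hKρ : ∀ y x : Euc N, ‖x - y‖ ≤ 1 → ρ x ≤ K * ρ y)
    (φ : Euc N → ℝ) (hφm : Measurable φ) (hφi : Integrable φ)
    (hφsupp : ∀ x : Euc N, 1 < ‖x‖ → φ x = 0)
    (u : Euc N → ℝ) (hum : Measurable u)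
    (hu : Integrable fun x => ρ x * |u x| ^ p) :
    wnorm p ρ (conv φ u) ≤ K ^ (1 / p) * (∫ x, |φ x|) * wnorm p ρ u :=
  stmt1_general p hp ρ hρc hρpos K hK hKρ φ hφm hφi hφsupp u hum hu
end
end

section
/- Let p ∈ [1,∞), let ρ : ℝ^N → ℝ be continuous and strictly positive with ∫_{ℝ^N} ρ(x) dx = 1, suppose K > 0 satisfies sup{ρ(x) : |x−y| ≤ 1} ≤ K ρ(y) for every y ∈ ℝ^N, and let β > 0. Let J be nonnegative, measurable, supported in the closed unit ball with ∫ J = 1; let g : ℝ → ℝ be globally Lipschitz with constant ℓ_g and g(0) = 0; let h : ℝ×ℝ → ℝ satisfy h(t,0) = 0 and |h(t,s₁) − h(t,s₂)| ≤ ℓ_h|s₁ − s₂| for all t,s₁,s₂. Then for each t ∈ ℝ the map f(t,u) := −u + g(β(J*u) + β h(t,u∘)) (where h(t,u) denotes the pointwise composition x ↦ h(t,u(x))) maps L^p(ℝ^N,ρ) into itself and satisfies ‖f(t,u) − f(t,v)‖_{L^p(ℝ^N,ρ)} ≤ (1 + ℓ_g β K^{1/p} + ℓ_g β ℓ_h)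 ‖u − v‖_{L^p(ℝ^N,ρ)} for all u, v ∈ L^p(ℝ^N,ρ). -/
open MeasureTheory Set
open scoped ENNReal

noncomputable section

/-- Membership in the weighted Lebesgue space `L^p(ℝ^N, ρ)`. -/
def MemWLp {N : ℕ} (p : ℝ) (ρ u : Euc N → ℝ) : Prop :=
  AEStronglyMeasurable u volume ∧ Integrable fun x => ρ x * |u x| ^ p

/-!
With `μ_ρ = ρ dx` we have `L^p(ℝ^N, ρ) = L^p(μ_ρ)`. For fixed `x`, `J(x - y) dy` is a probability
measure, so `‖·‖₁ ≤ ‖·‖_p` for it gives `|J*u - J*v|^p (x) ≤ ∫ J(x - y) |u - v|^p (y) dy`.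
Integrating against `ρ(x) dx` and exchanging the integrals, the factor `∫ ρ(x) J(x - y) dx` is at
most `K ρ(y)` because `J` vanishes outside the unit ball; hence `u ↦ J*u` is `K^{1/p}`-Lipschitz on
`L^p(ρ)`. The Lipschitz bounds on `g` and `h` give pointwise
`|f(t,u) - f(t,v)| ≤ (1 + ℓ_g β ℓ_h) |u - v| + ℓ_g β |J*u - J*v|`, and Minkowski's inequality
concludes. Since `f(t,0) = 0`, the case `v = 0` shows that `f(t,u) ∈ L^p(ρ)`.
-/

lemma eLpNorm_ofReal_rpow {α E : Type*} [MeasurableSpace α] [NormedAddCommGroup E]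
    {μ : Measure α} {p : ℝ} (hp : 0 < p) (f : α → E) :
    eLpNorm f (ENNReal.ofReal p) μ ^ p = ∫⁻ x, ‖f x‖ₑ ^ p ∂μ := by
  rw [eLpNorm_eq_eLpNorm' (by simpa using hp) ENNReal.ofReal_ne_top, ENNReal.toReal_ofReal hp.le,
    lintegral_rpow_enorm_eq_rpow_eLpNorm' hp]

/-- No integrability of `u`, `v` is needed: if `u - v ∈ L¹(ν)`, then either both are integrable
or neither is, in which case both Bochner integrals are the junk value `0`. -/
lemma enorm_integral_sub_integral_le_eLpNorm {α : Type*} [MeasurableSpace α] {ν : Measure α}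
    [IsProbabilityMeasure ν] {p : ℝ≥0∞} (hp : 1 ≤ p) {u v : α → ℝ}
    (hu : AEStronglyMeasurable u ν) (hv : AEStronglyMeasurable v ν) :
    ‖∫ y, u y ∂ν - ∫ y, v y ∂ν‖ₑ ≤ eLpNorm (u - v) p ν := by
  by_cases hfin : eLpNorm (u - v) p ν = ∞
  · simp [hfin]
  have huv : Integrable (u - v) ν :=
    memLp_one_iff_integrable.1 (MemLp.mono_exponent ⟨hu.sub hv, lt_top_iff_ne_top.2 hfin⟩ hp)
  by_cases hui : Integrable u ν
  · have hvi : Integrable v ν := by simpa using hui.sub huv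
    calc ‖∫ y, u y ∂ν - ∫ y, v y ∂ν‖ₑ = ‖∫ y, (u - v) y ∂ν‖ₑ := by
          rw [← integral_sub hui hvi]; rfl
      _ ≤ eLpNorm (u - v) 1 ν := by
          rw [eLpNorm_one_eq_lintegral_enorm]; exact enorm_integral_le_lintegral_enorm _
      _ ≤ eLpNorm (u - v) p ν := eLpNorm_le_eLpNorm_of_exponent_le hp (hu.sub hv)
  · have hvi : ¬ Integrable v ν := fun hvi => hui (by simpa using hvi.add huv)
    simp [integral_undef hui, integral_undef hvi]

lemma eLpNorm_const_mul_abs {α : Type*} [MeasurableSpace α] {μ : Measure α} {p : ℝ≥0∞}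
    {c : ℝ} (hc : 0 ≤ c) (f : α → ℝ) :
    eLpNorm (fun x => c * |f x|) p μ = ENNReal.ofReal c * eLpNorm f p μ := by
  rw [← Real.enorm_of_nonneg hc, ← eLpNorm_norm f]
  exact eLpNorm_const_smul c (fun x => ‖f x‖) p μ

lemma nonneg_of_abs_sub_le_mul {f : ℝ → ℝ} {L : ℝ}
    (hf : ∀ a b, |f a - f b| ≤ L * |a - b|) : 0 ≤ L := by
  simpa using (abs_nonneg _).trans (hf 1 0)

lemma continuous_of_abs_sub_le_mul {f : ℝ → ℝ} {L : ℝ}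
    (hf : ∀ a b, |f a - f b| ≤ L * |a - b|) : Continuous f :=
  (LipschitzWith.of_dist_le_mul (K := L.toNNReal) fun a b => by
    simpa [Real.dist_eq, Real.coe_toNNReal _ (nonneg_of_abs_sub_le_mul hf)]
      using hf a b).continuous

section

variable {N : ℕ}

def weightedVolume (ρ : Euc N → ℝ) : Measure (Euc N) :=
  volume.withDensity fun x => ENNReal.ofReal (ρ x)

lemma weightedVolume_absolutelyContinuous (ρ : Euc N → ℝ) : weightedVolume ρ ≪ volume :=
  withDensity_absolutelyContinuous _ _

lemma eLpNorm_weightedVolume_rpow {p : ℝ} (hp : 0 < p) {ρ : Euc N → ℝ} (hρ : Measurable ρ)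
    (u : Euc N → ℝ) :
    eLpNorm u (ENNReal.ofReal p) (weightedVolume ρ) ^ p =
      ∫⁻ x, ENNReal.ofReal (ρ x) * ‖u x‖ₑ ^ p := by
  rw [eLpNorm_ofReal_rpow hp, weightedVolume,
    lintegral_withDensity_eq_lintegral_mul_non_measurable _ hρ.ennreal_ofReal
      (.of_forall fun _ => ENNReal.ofReal_lt_top)]
  rfl

lemma ofReal_weight_mul_abs_rpow {p : ℝ} (hp : 0 < p) {ρ : Euc N → ℝ} (hρ : ∀ x, 0 ≤ ρ x)
    (u : Euc N → ℝ) (x : Euc N) :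
    ENNReal.ofReal (ρ x * |u x| ^ p) = ENNReal.ofReal (ρ x) * ‖u x‖ₑ ^ p := by
  rw [ENNReal.ofReal_mul (hρ x), ← ENNReal.ofReal_rpow_of_nonneg (abs_nonneg _) hp.le,
    ← Real.norm_eq_abs, ofReal_norm]

lemma aestronglyMeasurable_weight_mul_abs_rpow (p : ℝ) {ρ : Euc N → ℝ} (hρm : Measurable ρ)
    {u : Euc N → ℝ} (hu : AEStronglyMeasurable u volume) :
    AEStronglyMeasurable (fun x => ρ x * |u x| ^ p) volume :=
  hρm.aestronglyMeasurable.mul (hu.norm.aemeasurable.pow_const p).aestronglyMeasurable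

lemma memWLp_iff {p : ℝ} (hp : 0 < p) {ρ : Euc N → ℝ} (hρm : Measurable ρ)
    (hρ : ∀ x, 0 ≤ ρ x) {u : Euc N → ℝ} :
    MemWLp p ρ u ↔
      AEStronglyMeasurable u volume ∧ eLpNorm u (ENNReal.ofReal p) (weightedVolume ρ) < ∞ := by
  refine and_congr_right fun hu => ?_
  rw [← ENNReal.rpow_lt_top_iff_of_pos hp, eLpNorm_weightedVolume_rpow hp hρm, Integrable,
    and_iff_right (aestronglyMeasurable_weight_mul_abs_rpow p hρm hu), hasFiniteIntegral_iff_ofReal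
      (.of_forall fun x => mul_nonneg (hρ x) (by positivity))]
  simp only [ofReal_weight_mul_abs_rpow hp hρ]

lemma wnorm_eq_toReal_eLpNorm {p : ℝ} (hp : 0 < p) {ρ : Euc N → ℝ} (hρm : Measurable ρ)
    (hρ : ∀ x, 0 ≤ ρ x) {u : Euc N → ℝ} (hu : AEStronglyMeasurable u volume) :
    wnorm p ρ u = (eLpNorm u (ENNReal.ofReal p) (weightedVolume ρ)).toReal := by
  rw [wnorm, integral_eq_lintegral_of_nonneg_ae
      (.of_forall fun x => mul_nonneg (hρ x) (by positivity))
      (aestronglyMeasurable_weight_mul_abs_rpow p hρm hu)]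
  simp only [ofReal_weight_mul_abs_rpow hp hρ]
  rw [← eLpNorm_weightedVolume_rpow hp hρm, ← ENNReal.toReal_rpow,
    one_div, Real.rpow_rpow_inv ENNReal.toReal_nonneg hp.ne']

lemma memWLp_sub {p : ℝ} (hp : 0 < p) {ρ : Euc N → ℝ} (hρm : Measurable ρ) (hρ : ∀ x, 0 ≤ ρ x)
    {u v : Euc N → ℝ} (hu : MemWLp p ρ u) (hv : MemWLp p ρ v) :
    MemWLp p ρ (fun x => u x - v x) := by
  rw [memWLp_iff hp hρm hρ] at hu hv ⊢
  have hac := weightedVolume_absolutelyContinuous ρ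
  exact ⟨hu.1.sub hv.1, (MemLp.sub ⟨hu.1.mono_ac hac, hu.2⟩ ⟨hv.1.mono_ac hac, hv.2⟩).2⟩

lemma wnorm_le_mul_of_eLpNorm_le {p : ℝ} (hp : 0 < p) {ρ : Euc N → ℝ} (hρm : Measurable ρ)
    (hρ : ∀ x, 0 ≤ ρ x) {f w : Euc N → ℝ} (hf : AEStronglyMeasurable f volume)
    (hw : MemWLp p ρ w) {C : ℝ} (hC : 0 ≤ C)
    (hfw : eLpNorm f (ENNReal.ofReal p) (weightedVolume ρ) ≤
      ENNReal.ofReal C * eLpNorm w (ENNReal.ofReal p) (weightedVolume ρ)) :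
    wnorm p ρ f ≤ C * wnorm p ρ w := by
  obtain ⟨hw_meas, hw_fin⟩ := (memWLp_iff hp hρm hρ).1 hw
  rw [wnorm_eq_toReal_eLpNorm hp hρm hρ hf, wnorm_eq_toReal_eLpNorm hp hρm hρ hw_meas,
    ← ENNReal.toReal_ofReal hC, ← ENNReal.toReal_mul]
  exact ENNReal.toReal_mono (ENNReal.mul_ne_top ENNReal.ofReal_ne_top hw_fin.ne) hfw

def kernelMeasure (J : Euc N → ℝ) (x : Euc N) : Measure (Euc N) :=
  volume.withDensity fun y => ENNReal.ofReal (J (x - y))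

lemma kernelMeasure_absolutelyContinuous (J : Euc N → ℝ) (x : Euc N) :
    kernelMeasure J x ≪ volume :=
  withDensity_absolutelyContinuous _ _

lemma isProbabilityMeasure_kernelMeasure {J : Euc N → ℝ}
    (hJ : ∫⁻ z, ENNReal.ofReal (J z) = 1) (x : Euc N) :
    IsProbabilityMeasure (kernelMeasure J x) where
  measure_univ := by
    rw [kernelMeasure, withDensity_apply _ MeasurableSet.univ, Measure.restrict_univ,
      lintegral_sub_left_eq_self (fun z => ENNReal.ofReal (J z)) x, hJ]

lemma conv_eq_integral_kernelMeasure {J : Euc N → ℝ} (hJm : Measurable J) (hJ : ∀ z, 0 ≤ J z)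
    (u : Euc N → ℝ) (x : Euc N) :
    conv J u x = ∫ y, u y ∂kernelMeasure J x := by
  rw [kernelMeasure, integral_withDensity_eq_integral_toReal_smul (by fun_prop)
    (.of_forall fun _ => ENNReal.ofReal_lt_top)]
  simp only [ENNReal.toReal_ofReal (hJ _), smul_eq_mul, conv]

lemma lintegral_kernelMeasure {J : Euc N → ℝ} (hJm : Measurable J) (x : Euc N)
    (F : Euc N → ℝ≥0∞) :
    ∫⁻ y, F y ∂kernelMeasure J x = ∫⁻ y, ENNReal.ofReal (J (x - y)) * F y :=
  lintegral_withDensity_eq_lintegral_mul_non_measurable _ (by fun_prop)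
    (.of_forall fun _ => ENNReal.ofReal_lt_top) F

lemma enorm_conv_sub_conv_rpow_le {p : ℝ} (hp : 1 ≤ p) {J : Euc N → ℝ} (hJm : Measurable J)
    (hJ : ∀ z, 0 ≤ J z) (hJ1 : ∫⁻ z, ENNReal.ofReal (J z) = 1) {u v : Euc N → ℝ}
    (hu : AEStronglyMeasurable u volume) (hv : AEStronglyMeasurable v volume) (x : Euc N) :
    ‖conv J u x - conv J v x‖ₑ ^ p ≤ ∫⁻ y, ENNReal.ofReal (J (x - y)) * ‖u y - v y‖ₑ ^ p := by
  have hp0 : 0 < p := by linarith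
  have := isProbabilityMeasure_kernelMeasure hJ1 x
  have hac := kernelMeasure_absolutelyContinuous J x
  calc ‖conv J u x - conv J v x‖ₑ ^ p
      ≤ eLpNorm (u - v) (ENNReal.ofReal p) (kernelMeasure J x) ^ p := by
        rw [conv_eq_integral_kernelMeasure hJm hJ, conv_eq_integral_kernelMeasure hJm hJ]
        gcongr
        exact enorm_integral_sub_integral_le_eLpNorm (ENNReal.one_le_ofReal.2 hp)
          (hu.mono_ac hac) (hv.mono_ac hac)
    _ = ∫⁻ y, ENNReal.ofReal (J (x - y)) * ‖u y - v y‖ₑ ^ p := by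
        rw [eLpNorm_ofReal_rpow hp0, lintegral_kernelMeasure hJm]
        rfl

lemma lintegral_weight_mul_kernel_le {ρ J : Euc N → ℝ} {K : ℝ} (hK : 0 ≤ K)
    (hKρ : ∀ y x : Euc N, ‖x - y‖ ≤ 1 → ρ x ≤ K * ρ y)
    (hJsupp : ∀ z : Euc N, 1 < ‖z‖ → J z = 0) (hJ1 : ∫⁻ z, ENNReal.ofReal (J z) = 1)
    (y : Euc N) :
    ∫⁻ x, ENNReal.ofReal (ρ x) * ENNReal.ofReal (J (x - y)) ≤
      ENNReal.ofReal K * ENNReal.ofReal (ρ y) :=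
  calc ∫⁻ x, ENNReal.ofReal (ρ x) * ENNReal.ofReal (J (x - y))
      ≤ ∫⁻ x, ENNReal.ofReal (K * ρ y) * ENNReal.ofReal (J (x - y)) := by
        refine lintegral_mono fun x => ?_
        rcases le_or_gt ‖x - y‖ 1 with hxy | hxy
        · gcongr
          exact hKρ y x hxy
        · simp [hJsupp _ hxy]
    _ = ENNReal.ofReal K * ENNReal.ofReal (ρ y) := by
        rw [lintegral_const_mul' _ _ ENNReal.ofReal_ne_top,
          lintegral_sub_right_eq_self (fun z => ENNReal.ofReal (J z)) y, hJ1, mul_one,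
          ENNReal.ofReal_mul hK]

lemma lintegral_weight_mul_lintegral_kernel_le {ρ J : Euc N → ℝ} (hρm : Measurable ρ)
    (hJm : Measurable J) {K : ℝ} (hK : 0 ≤ K)
    (hKρ : ∀ y x : Euc N, ‖x - y‖ ≤ 1 → ρ x ≤ K * ρ y)
    (hJsupp : ∀ z : Euc N, 1 < ‖z‖ → J z = 0) (hJ1 : ∫⁻ z, ENNReal.ofReal (J z) = 1)
    {F : Euc N → ℝ≥0∞} (hF : AEMeasurable F volume) :
    ∫⁻ x, ENNReal.ofReal (ρ x) * ∫⁻ y, ENNReal.ofReal (J (x - y)) * F y ≤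
      ENNReal.ofReal K * ∫⁻ y, ENNReal.ofReal (ρ y) * F y :=
  calc ∫⁻ x, ENNReal.ofReal (ρ x) * ∫⁻ y, ENNReal.ofReal (J (x - y)) * F y
      = ∫⁻ y, (∫⁻ x, ENNReal.ofReal (ρ x) * ENNReal.ofReal (J (x - y))) * F y := by
        simp_rw [← lintegral_const_mul' _ _ ENNReal.ofReal_ne_top]
        rw [lintegral_lintegral_swap (by fun_prop)]
        refine lintegral_congr fun y => ?_
        rw [← lintegral_mul_const _ (by fun_prop)]
        simp_rw [mul_assoc]
    _ ≤ ∫⁻ y, ENNReal.ofReal K * (ENNReal.ofReal (ρ y) * F y) := by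
        refine lintegral_mono fun y => ?_
        rw [← mul_assoc]
        gcongr
        exact lintegral_weight_mul_kernel_le hK hKρ hJsupp hJ1 y
    _ = ENNReal.ofReal K * ∫⁻ y, ENNReal.ofReal (ρ y) * F y :=
        lintegral_const_mul' _ _ ENNReal.ofReal_ne_top

lemma eLpNorm_conv_sub_conv_le {p : ℝ} (hp : 1 ≤ p) {ρ J : Euc N → ℝ} (hρm : Measurable ρ)
    (hJm : Measurable J) (hJ : ∀ z, 0 ≤ J z) {K : ℝ} (hK : 0 ≤ K)
    (hKρ : ∀ y x : Euc N, ‖x - y‖ ≤ 1 → ρ x ≤ K * ρ y)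
    (hJsupp : ∀ z : Euc N, 1 < ‖z‖ → J z = 0) (hJ1 : ∫⁻ z, ENNReal.ofReal (J z) = 1)
    {u v : Euc N → ℝ} (hu : AEStronglyMeasurable u volume) (hv : AEStronglyMeasurable v volume) :
    eLpNorm (fun x => conv J u x - conv J v x) (ENNReal.ofReal p) (weightedVolume ρ) ≤
      ENNReal.ofReal (K ^ (1 / p)) *
        eLpNorm (fun x => u x - v x) (ENNReal.ofReal p) (weightedVolume ρ) := by
  have hp0 : 0 < p := by linarith
  rw [← ENNReal.rpow_le_rpow_iff hp0, ENNReal.mul_rpow_of_nonneg _ _ hp0.le,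
    eLpNorm_weightedVolume_rpow hp0 hρm, eLpNorm_weightedVolume_rpow hp0 hρm,
    ENNReal.ofReal_rpow_of_nonneg (by positivity) hp0.le, ← Real.rpow_mul hK,
    one_div_mul_cancel hp0.ne', Real.rpow_one]
  calc ∫⁻ x, ENNReal.ofReal (ρ x) * ‖conv J u x - conv J v x‖ₑ ^ p
      ≤ ∫⁻ x, ENNReal.ofReal (ρ x) * ∫⁻ y, ENNReal.ofReal (J (x - y)) * ‖u y - v y‖ₑ ^ p := by
        gcongr with x
        exact enorm_conv_sub_conv_rpow_le hp hJm hJ hJ1 hu hv x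
    _ ≤ _ := lintegral_weight_mul_lintegral_kernel_le hρm hJm hK hKρ hJsupp hJ1
        ((hu.sub hv).enorm.pow_const p)

/-- The right-hand side `f(t, u)` of the paper, with `H = h t`. -/
def nonlocalField (β : ℝ) (J : Euc N → ℝ) (g H : ℝ → ℝ) (u : Euc N → ℝ) (x : Euc N) : ℝ :=
  -u x + g (β * conv J u x + β * H (u x))

lemma aestronglyMeasurable_conv {J : Euc N → ℝ} (hJm : Measurable J) {u : Euc N → ℝ}
    (hu : AEStronglyMeasurable u volume) : AEStronglyMeasurable (conv J u) volume :=
  AEStronglyMeasurable.integral_prod_right' (f := fun z : Euc N × Euc N => J (z.1 - z.2) * u z.2)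
    ((hJm.comp (measurable_fst.sub measurable_snd)).aestronglyMeasurable.mul
      (hu.comp_quasiMeasurePreserving Measure.quasiMeasurePreserving_snd))

lemma aestronglyMeasurable_nonlocalField (β : ℝ) {J : Euc N → ℝ} (hJm : Measurable J)
    {g H : ℝ → ℝ} (hg : Continuous g) (hH : Continuous H) {u : Euc N → ℝ}
    (hu : AEStronglyMeasurable u volume) :
    AEStronglyMeasurable (nonlocalField β J g H u) volume :=
  hu.neg.add (hg.comp_aestronglyMeasurable
    ((aestronglyMeasurable_conv hJm hu).const_mul β |>.add
      ((hH.comp_aestronglyMeasurable hu).const_mul β)))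

lemma nonlocalField_zero (β : ℝ) (J : Euc N → ℝ) {g H : ℝ → ℝ} (hg : g 0 = 0) (hH : H 0 = 0)
    (x : Euc N) : nonlocalField β J g H (fun _ => 0) x = 0 := by
  simp [nonlocalField, conv, hg, hH]

lemma abs_nonlocalField_sub_le {β : ℝ} (hβ : 0 ≤ β) (J : Euc N → ℝ) {g H : ℝ → ℝ} {ℓg ℓh : ℝ}
    (hg : ∀ s₁ s₂, |g s₁ - g s₂| ≤ ℓg * |s₁ - s₂|) (hH : ∀ s₁ s₂, |H s₁ - H s₂| ≤ ℓh * |s₁ - s₂|)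
    (u v : Euc N → ℝ) (x : Euc N) :
    |nonlocalField β J g H u x - nonlocalField β J g H v x| ≤
      (1 + ℓg * β * ℓh) * |u x - v x| + ℓg * β * |conv J u x - conv J v x| := by
  have hℓg := nonneg_of_abs_sub_le_mul hg
  have hinner : |β * conv J u x + β * H (u x) - (β * conv J v x + β * H (v x))| ≤
      β * |conv J u x - conv J v x| + β * (ℓh * |u x - v x|) := by
    rw [show β * conv J u x + β * H (u x) - (β * conv J v x + β * H (v x)) =
      β * (conv J u x - conv J v x) + β * (H (u x) - H (v x)) by ring]
    refine (abs_add_le _ _).trans ?_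
    rw [abs_mul, abs_mul, abs_of_nonneg hβ]
    gcongr
    exact hH _ _
  set a := β * conv J u x + β * H (u x)
  set b := β * conv J v x + β * H (v x)
  calc |nonlocalField β J g H u x - nonlocalField β J g H v x|
      = |(v x - u x) + (g a - g b)| := by
        rw [nonlocalField, nonlocalField]
        congr 1
        ring
    _ ≤ |u x - v x| + |g a - g b| := by
        rw [← abs_sub_comm (v x)]
        exact abs_add_le _ _
    _ ≤ |u x - v x| + ℓg * (β * |conv J u x - conv J v x| + β * (ℓh * |u x - v x|)) := by
        gcongr
        exact (hg a b).trans (by gcongr)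
    _ = (1 + ℓg * β * ℓh) * |u x - v x| + ℓg * β * |conv J u x - conv J v x| := by ring

lemma eLpNorm_nonlocalField_sub_le {μ : Measure (Euc N)} {p : ℝ≥0∞} (hp : 1 ≤ p) {β : ℝ}
    (hβ : 0 ≤ β) {J : Euc N → ℝ} {g H : ℝ → ℝ} {ℓg ℓh : ℝ}
    (hg : ∀ s₁ s₂, |g s₁ - g s₂| ≤ ℓg * |s₁ - s₂|) (hH : ∀ s₁ s₂, |H s₁ - H s₂| ≤ ℓh * |s₁ - s₂|)
    {u v : Euc N → ℝ} (huv : AEStronglyMeasurable (fun x => u x - v x) μ)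
    (hconv : AEStronglyMeasurable (fun x => conv J u x - conv J v x) μ) :
    eLpNorm (fun x => nonlocalField β J g H u x - nonlocalField β J g H v x) p μ ≤
      ENNReal.ofReal (1 + ℓg * β * ℓh) * eLpNorm (fun x => u x - v x) p μ +
        ENNReal.ofReal (ℓg * β) * eLpNorm (fun x => conv J u x - conv J v x) p μ := by
  have hℓg := nonneg_of_abs_sub_le_mul hg
  have hℓh := nonneg_of_abs_sub_le_mul hH
  calc eLpNorm (fun x => nonlocalField β J g H u x - nonlocalField β J g H v x) p μ
      ≤ eLpNorm (fun x => (1 + ℓg * β * ℓh) * |u x - v x| +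
          ℓg * β * |conv J u x - conv J v x|) p μ :=
        eLpNorm_mono_real (abs_nonlocalField_sub_le hβ J hg hH u v)
    _ ≤ eLpNorm (fun x => (1 + ℓg * β * ℓh) * |u x - v x|) p μ +
          eLpNorm (fun x => ℓg * β * |conv J u x - conv J v x|) p μ :=
        eLpNorm_add_le (huv.norm.const_mul _) (hconv.norm.const_mul _) hp
    _ = _ := by
        rw [eLpNorm_const_mul_abs (by positivity), eLpNorm_const_mul_abs (by positivity)]

lemma eLpNorm_weightedVolume_nonlocalField_sub_le {p : ℝ} (hp : 1 ≤ p) {ρ J : Euc N → ℝ}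
    (hρm : Measurable ρ) (hJm : Measurable J) (hJ : ∀ z, 0 ≤ J z) {K : ℝ} (hK : 0 ≤ K)
    (hKρ : ∀ y x : Euc N, ‖x - y‖ ≤ 1 → ρ x ≤ K * ρ y)
    (hJsupp : ∀ z : Euc N, 1 < ‖z‖ → J z = 0) (hJ1 : ∫⁻ z, ENNReal.ofReal (J z) = 1)
    {β : ℝ} (hβ : 0 ≤ β) {g H : ℝ → ℝ} {ℓg ℓh : ℝ}
    (hg : ∀ s₁ s₂, |g s₁ - g s₂| ≤ ℓg * |s₁ - s₂|) (hH : ∀ s₁ s₂, |H s₁ - H s₂| ≤ ℓh * |s₁ - s₂|)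
    {u v : Euc N → ℝ} (hu : AEStronglyMeasurable u volume) (hv : AEStronglyMeasurable v volume) :
    eLpNorm (fun x => nonlocalField β J g H u x - nonlocalField β J g H v x)
        (ENNReal.ofReal p) (weightedVolume ρ) ≤
      ENNReal.ofReal (1 + ℓg * β * K ^ (1 / p) + ℓg * β * ℓh) *
        eLpNorm (fun x => u x - v x) (ENNReal.ofReal p) (weightedVolume ρ) := by
  have hℓg := nonneg_of_abs_sub_le_mul hg
  have hℓh := nonneg_of_abs_sub_le_mul hH
  calc _ ≤ _ := eLpNorm_nonlocalField_sub_le (ENNReal.one_le_ofReal.2 hp) hβ hg hH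
        ((hu.sub hv).mono_ac (weightedVolume_absolutelyContinuous ρ))
        (((aestronglyMeasurable_conv hJm hu).sub (aestronglyMeasurable_conv hJm hv)).mono_ac
          (weightedVolume_absolutelyContinuous ρ))
    _ ≤ ENNReal.ofReal (1 + ℓg * β * ℓh) *
          eLpNorm (fun x => u x - v x) (ENNReal.ofReal p) (weightedVolume ρ) +
        ENNReal.ofReal (ℓg * β) * (ENNReal.ofReal (K ^ (1 / p)) *
          eLpNorm (fun x => u x - v x) (ENNReal.ofReal p) (weightedVolume ρ)) := by
        gcongr
        exact eLpNorm_conv_sub_conv_le hp hρm hJm hJ hK hKρ hJsupp hJ1 hu hv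
    _ = _ := by
        rw [← mul_assoc, ← add_mul, ← ENNReal.ofReal_mul (by positivity),
          ← ENNReal.ofReal_add (by positivity) (by positivity)]
        congr 2
        ring

end

theorem stmt4_general {N : ℕ} (p : ℝ) (hp : 1 ≤ p)
    (ρ : Euc N → ℝ) (hρc : Continuous ρ) (hρpos : ∀ x, 0 < ρ x)
    (K : ℝ) (hK : 0 < K) (hKρ : ∀ y x : Euc N, ‖x - y‖ ≤ 1 → ρ x ≤ K * ρ y)
    (β : ℝ) (hβ : 0 < β)
    (J : Euc N → ℝ) (hJnn : ∀ x, 0 ≤ J x) (hJm : Measurable J)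
    (hJsupp : ∀ x : Euc N, 1 < ‖x‖ → J x = 0) (hJ1 : ∫ x, J x = 1)
    (g : ℝ → ℝ) (ℓg : ℝ) (hgLip : ∀ s₁ s₂, |g s₁ - g s₂| ≤ ℓg * |s₁ - s₂|) (hg0 : g 0 = 0)
    (h : ℝ → ℝ → ℝ) (ℓh : ℝ) (hh0 : ∀ t, h t 0 = 0)
    (hhLip : ∀ t s₁ s₂, |h t s₁ - h t s₂| ≤ ℓh * |s₁ - s₂|)
    (t : ℝ)
    (u v : Euc N → ℝ) (huM : MemWLp p ρ u) (hvM : MemWLp p ρ v) :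
    MemWLp p ρ (fun x => -u x + g (β * conv J u x + β * h t (u x))) ∧
    wnorm p ρ (fun x =>
        (-u x + g (β * conv J u x + β * h t (u x))) -
        (-v x + g (β * conv J v x + β * h t (v x)))) ≤
      (1 + ℓg * β * K ^ (1 / p) + ℓg * β * ℓh) * wnorm p ρ (fun x => u x - v x) := by
  have hp0 : 0 < p := by linarith
  have hρm := hρc.measurable
  have hρ0 : ∀ x, 0 ≤ ρ x := fun x => (hρpos x).le
  have hJ_lintegral : ∫⁻ z, ENNReal.ofReal (J z) = 1 := by
    rw [← ofReal_integral_eq_lintegral_ofReal (.of_integral_ne_zero (by simp [hJ1]))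
      (.of_forall hJnn), hJ1, ENNReal.ofReal_one]
  have hC : 0 ≤ 1 + ℓg * β * K ^ (1 / p) + ℓg * β * ℓh := by
    have := nonneg_of_abs_sub_le_mul hgLip
    have := nonneg_of_abs_sub_le_mul (hhLip t)
    positivity
  have hlip {u v : Euc N → ℝ} (hu : AEStronglyMeasurable u volume)
      (hv : AEStronglyMeasurable v volume) :=
    eLpNorm_weightedVolume_nonlocalField_sub_le hp hρm hJm hJnn hK.le hKρ hJsupp hJ_lintegral hβ.le
      hgLip (hhLip t) hu hv
  have hmeas {u : Euc N → ℝ} (hu : AEStronglyMeasurable u volume) :=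
    aestronglyMeasurable_nonlocalField β hJm (continuous_of_abs_sub_le_mul hgLip)
      (continuous_of_abs_sub_le_mul (hhLip t)) hu
  change MemWLp p ρ (nonlocalField β J g (h t) u) ∧
    wnorm p ρ (fun x => nonlocalField β J g (h t) u x - nonlocalField β J g (h t) v x) ≤ _
  refine ⟨(memWLp_iff hp0 hρm hρ0).2 ⟨hmeas huM.1, ?_⟩,
    wnorm_le_mul_of_eLpNorm_le hp0 hρm hρ0 ((hmeas huM.1).sub (hmeas hvM.1))
      (memWLp_sub hp0 hρm hρ0 huM hvM) hC (hlip huM.1 hvM.1)⟩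
  have hFu := hlip huM.1 (aestronglyMeasurable_const (b := 0))
  simp only [nonlocalField_zero β J hg0 (hh0 t), sub_zero] at hFu
  exact hFu.trans_lt (ENNReal.mul_lt_top ENNReal.ofReal_lt_top ((memWLp_iff hp0 hρm hρ0).1 huM).2)

theorem stmt4 {N : ℕ} (p : ℝ) (hp : 1 ≤ p)
    (ρ : Euc N → ℝ) (hρc : Continuous ρ) (hρpos : ∀ x, 0 < ρ x) (hρ1 : ∫ x, ρ x = 1)
    (K : ℝ) (hK : 0 < K) (hKρ : ∀ y x : Euc N, ‖x - y‖ ≤ 1 → ρ x ≤ K * ρ y)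
    (β : ℝ) (hβ : 0 < β)
    (J : Euc N → ℝ) (hJnn : ∀ x, 0 ≤ J x) (hJm : Measurable J)
    (hJsupp : ∀ x : Euc N, 1 < ‖x‖ → J x = 0) (hJ1 : ∫ x, J x = 1)
    (g : ℝ → ℝ) (ℓg : ℝ) (hgLip : ∀ s₁ s₂, |g s₁ - g s₂| ≤ ℓg * |s₁ - s₂|) (hg0 : g 0 = 0)
    (h : ℝ → ℝ → ℝ) (ℓh : ℝ) (hh0 : ∀ t, h t 0 = 0)
    (hhLip : ∀ t s₁ s₂, |h t s₁ - h t s₂| ≤ ℓh * |s₁ - s₂|)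
    (t : ℝ)
    (u v : Euc N → ℝ) (huM : MemWLp p ρ u) (hvM : MemWLp p ρ v) :
    MemWLp p ρ (fun x => -u x + g (β * conv J u x + β * h t (u x))) ∧
    wnorm p ρ (fun x =>
        (-u x + g (β * conv J u x + β * h t (u x))) -
        (-v x + g (β * conv J v x + β * h t (v x)))) ≤
      (1 + ℓg * β * K ^ (1 / p) + ℓg * β * ℓh) * wnorm p ρ (fun x => u x - v x) :=
  stmt4_general p hp ρ hρc hρpos K hK hKρ β hβ J hJnn hJm hJsupp hJ1 g ℓg hgLip hg0 h ℓh hh0 hhLip t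
    u v huM hvM
end
end

section
/- Let p ∈ [1,∞), let ρ : ℝ^N → ℝ be continuous and strictly positive with ∫_{ℝ^N} ρ(x) dx = 1, let β > 0, let J be nonnegative, measurable, supported in the closed unit ball with ∫ J = 1, let g : ℝ → ℝ be measurable with |g(s)| ≤ a for all s, and let h : ℝ×ℝ → ℝ be any function. Then for every ε > 0, every bounded set B ⊆ L^p(ℝ^N,ρ), and every t ∈ ℝ, there exists τ₀ = τ₀(t,B,ε) ≤ t such that for every τ ≤ τ₀, every u_τ ∈ B, and every function u : [τ,∞) → L^p(ℝ^N,ρ) satisfying u(t',x) = e^{−(t'−τ)} u_τ(x) + ∫_τ^{t'} e^{−(t'−s)} g(β(J*u)(s,x) + β h(s,u(s,x))) ds for all t' ≥ τ, one has ‖u(t)‖_{L^p(ℝ^N,ρ)} ≤ a + ε. (The ball of radius a + ε is pullback absorbing.) -/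
open MeasureTheory Set
open scoped ENNReal

noncomputable section

/-- `u` satisfies the variation-of-constants identity on `[τ, ∞)` with initial datum `uτ`. -/
def IsSolution {N : ℕ} (J : Euc N → ℝ) (g : ℝ → ℝ) (h : ℝ → ℝ → ℝ) (β τ : ℝ)
    (uτ : Euc N → ℝ) (u : ℝ → Euc N → ℝ) : Prop :=
  ∀ t ≥ τ, ∀ x, u t x = Real.exp (-(t - τ)) * uτ x +
    ∫ s in τ..t, Real.exp (-(t - s)) * g (β * conv J (u s) x + β * h s (u s x))

theorem stmt8 {N : ℕ} (p : ℝ) (hp : 1 ≤ p)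
    (ρ : Euc N → ℝ) (hρc : Continuous ρ) (hρpos : ∀ x, 0 < ρ x) (hρ1 : ∫ x, ρ x = 1)
    (β : ℝ) (hβ : 0 < β)
    (J : Euc N → ℝ) (hJnn : ∀ x, 0 ≤ J x) (hJm : Measurable J)
    (hJsupp : ∀ x : Euc N, 1 < ‖x‖ → J x = 0) (hJ1 : ∫ x, J x = 1)
    (g : ℝ → ℝ) (hgm : Measurable g) (a : ℝ) (hga : ∀ s, |g s| ≤ a)
    (h : ℝ → ℝ → ℝ)
    (ε : ℝ) (hε : 0 < ε)
    (B : Set (Euc N → ℝ)) (hBmem : ∀ w ∈ B, MemWLp p ρ w)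
    (hBbdd : ∃ M : ℝ, ∀ w ∈ B, wnorm p ρ w ≤ M)
    (t : ℝ) :
    ∃ τ₀ ≤ t, ∀ τ ≤ τ₀, ∀ uτ ∈ B, ∀ u : ℝ → Euc N → ℝ,
      IsSolution J g h β τ uτ u → wnorm p ρ (u t) ≤ a + ε := by
  classical
  obtain ⟨M, hM⟩ := hBbdd
  have ha : 0 ≤ a := (abs_nonneg _).trans (hga 0)
  have hp0 : (0:ℝ) < p := lt_of_lt_of_le one_pos hp
  set M' : ℝ := max M 0 with hM'def
  have hM'0 : 0 ≤ M' := le_max_right _ _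
  have hapow : a ^ p < (a + ε) ^ p := Real.rpow_lt_rpow ha (by linarith) hp0
  set δ : ℝ := (a + ε) ^ p - a ^ p with hδdef
  have hδ0 : 0 < δ := by simp [hδdef]; linarith
  set K : ℝ := M' ^ p + 1 with hKdef
  have hK0 : 0 < K := by positivity
  have hMK : M' ^ p ≤ K := by simp [hKdef]
  refine ⟨min t (t + Real.log (δ / K)), min_le_left _ _, ?_⟩
  intro τ hτ uτ huτ u hu
  have hτt : τ ≤ t := hτ.trans (min_le_left _ _)
  set w : ℝ := Real.exp (-(t - τ)) with hwdef
  have hw0 : 0 < w := Real.exp_pos _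
  have hw1 : w ≤ 1 := by
    rw [hwdef, ← Real.exp_zero]
    exact Real.exp_le_exp.mpr (by linarith)
  -- bound on w
  have hwle : w * M' ^ p ≤ δ := by
    have h1 : w ≤ δ / K := by
      have : -(t - τ) ≤ Real.log (δ / K) := by
        have := hτ.trans (min_le_right t (t + Real.log (δ / K)))
        linarith
      calc w ≤ Real.exp (Real.log (δ / K)) := Real.exp_le_exp.mpr this
        _ = δ / K := Real.exp_log (by positivity)
    calc w * M' ^ p ≤ (δ / K) * K :=
          mul_le_mul h1 hMK (Real.rpow_nonneg hM'0 p) (by positivity)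
      _ = δ := by field_simp
  -- bound on the Duhamel term
  have hI : ∀ x : Euc N,
      |∫ s in τ..t, Real.exp (-(t - s)) * g (β * conv J (u s) x + β * h s (u s x))|
        ≤ (1 - w) * a := by
    intro x
    set F : ℝ → ℝ := fun s => Real.exp (-(t - s)) * g (β * conv J (u s) x + β * h s (u s x))
      with hF
    have hGint : IntervalIntegrable (fun s => Real.exp (-(t - s)) * a) volume τ t :=
      (Continuous.mul (by continuity) continuous_const).intervalIntegrable τ t
    have hGval : (∫ s in τ..t, Real.exp (-(t - s)) * a) = (1 - w) * a := by
      have h1 : (fun s => Real.exp (-(t - s)) * a) = fun s => Real.exp (s - t) * a := by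
        funext s; ring_nf
      rw [h1, intervalIntegral.integral_mul_const,
        intervalIntegral.integral_comp_sub_right Real.exp t, integral_exp]
      rw [hwdef]
      ring_nf
      rw [Real.exp_zero]
      ring
    by_cases hint : IntervalIntegrable F volume τ t
    · calc |∫ s in τ..t, F s| ≤ ∫ s in τ..t, |F s| :=
            intervalIntegral.abs_integral_le_integral_abs hτt
        _ ≤ ∫ s in τ..t, Real.exp (-(t - s)) * a := by
            refine intervalIntegral.integral_mono_on hτt hint.abs hGint ?_
            intro s _
            rw [hF, abs_mul, abs_of_pos (Real.exp_pos _)]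
            exact mul_le_mul_of_nonneg_left (hga _) (Real.exp_pos _).le
        _ = (1 - w) * a := hGval
    · rw [intervalIntegral.integral_undef hint]
      simpa using mul_nonneg (by linarith) ha
  -- pointwise bound on |u t x|
  have hpt : ∀ x : Euc N, |u t x| ≤ w * |uτ x| + (1 - w) * a := by
    intro x
    rw [hu t hτt x]
    calc |Real.exp (-(t - τ)) * uτ x + _| ≤ |Real.exp (-(t - τ)) * uτ x| + _ := abs_add_le _ _
      _ ≤ w * |uτ x| + (1 - w) * a := by
          rw [abs_mul, abs_of_pos (Real.exp_pos _)]
          exact add_le_add le_rfl (hI x)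
  -- convexity: pointwise bound on |u t x| ^ p
  have hcvx : ∀ x : Euc N, |u t x| ^ p ≤ w * |uτ x| ^ p + (1 - w) * a ^ p := by
    intro x
    have h1 : |u t x| ^ p ≤ (w * |uτ x| + (1 - w) * a) ^ p :=
      Real.rpow_le_rpow (abs_nonneg _) (hpt x) hp0.le
    have h2 := (convexOn_rpow hp).2 (Set.mem_Ici.mpr (abs_nonneg (uτ x)))
      (Set.mem_Ici.mpr ha) hw0.le (by linarith : (0:ℝ) ≤ 1 - w) (by ring)
    simpa [smul_eq_mul] using h1.trans h2
  -- integrability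
  obtain ⟨huτm, huτi⟩ := hBmem uτ huτ
  have hρint : Integrable ρ := by
    by_contra hc
    rw [integral_undef hc] at hρ1
    norm_num at hρ1
  have hGi : Integrable (fun x => w * (ρ x * |uτ x| ^ p) + (1 - w) * a ^ p * ρ x) :=
    (huτi.const_mul w).add (hρint.const_mul _)
  have hint : (∫ x, ρ x * |u t x| ^ p)
      ≤ ∫ x, (w * (ρ x * |uτ x| ^ p) + (1 - w) * a ^ p * ρ x) := by
    refine integral_mono_of_nonneg (Filter.Eventually.of_forall fun x => ?_) hGi
      (Filter.Eventually.of_forall fun x => ?_)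
    · exact mul_nonneg (hρpos x).le (Real.rpow_nonneg (abs_nonneg _) p)
    · have := mul_le_mul_of_nonneg_left (hcvx x) (hρpos x).le
      calc ρ x * |u t x| ^ p ≤ ρ x * (w * |uτ x| ^ p + (1 - w) * a ^ p) := this
        _ = w * (ρ x * |uτ x| ^ p) + (1 - w) * a ^ p * ρ x := by ring
  have hintval : (∫ x, (w * (ρ x * |uτ x| ^ p) + (1 - w) * a ^ p * ρ x))
      = w * (∫ x, ρ x * |uτ x| ^ p) + (1 - w) * a ^ p := by
    rw [integral_add (huτi.const_mul w) (hρint.const_mul _),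
      integral_const_mul, integral_const_mul, hρ1, mul_one]
  -- bound ∫ ρ |uτ|^p
  set A : ℝ := ∫ x, ρ x * |uτ x| ^ p with hAdef
  have hA0 : 0 ≤ A :=
    integral_nonneg fun x => mul_nonneg (hρpos x).le (Real.rpow_nonneg (abs_nonneg _) p)
  have hAM : A ≤ M' ^ p := by
    have h1 : A ^ (1 / p) ≤ M' := (hM uτ huτ).trans (le_max_left _ _)
    have h2 : (A ^ (1 / p)) ^ p ≤ M' ^ p :=
      Real.rpow_le_rpow (Real.rpow_nonneg hA0 _) h1 hp0.le
    rwa [← Real.rpow_mul hA0, one_div, inv_mul_cancel₀ hp0.ne', Real.rpow_one] at h2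
  -- conclude
  have hfinal : (∫ x, ρ x * |u t x| ^ p) ≤ (a + ε) ^ p := by
    have h1 : w * A ≤ δ := le_trans (mul_le_mul_of_nonneg_left hAM hw0.le) hwle
    have h2 : (1 - w) * a ^ p ≤ a ^ p := by
      nlinarith [Real.rpow_nonneg ha p]
    calc (∫ x, ρ x * |u t x| ^ p) ≤ w * A + (1 - w) * a ^ p := by
          rw [hAdef]; exact hint.trans_eq hintval
      _ ≤ δ + a ^ p := add_le_add h1 h2
      _ = (a + ε) ^ p := by rw [hδdef]; ring
  have hnn : 0 ≤ ∫ x, ρ x * |u t x| ^ p :=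
    integral_nonneg fun x => mul_nonneg (hρpos x).le (Real.rpow_nonneg (abs_nonneg _) p)
  calc wnorm p ρ (u t) = (∫ x, ρ x * |u t x| ^ p) ^ (1 / p) := rfl
    _ ≤ ((a + ε) ^ p) ^ (1 / p) := Real.rpow_le_rpow hnn hfinal (by positivity)
    _ = a + ε := by
        rw [← Real.rpow_mul (by linarith), mul_one_div, div_self hp0.ne', Real.rpow_one]
end
end

section
/- Let p ∈ [1,∞), let ρ : ℝ^N → ℝ be continuous and strictly positive with ∫_{ℝ^N} ρ(x) dx = 1, let β > 0, let J be nonnegative, measurable, supported in the closed unit ball with ∫ J = 1, let g : ℝ → ℝ be measurable with |g(s)| ≤ a for all s, and let h : ℝ×ℝ → ℝ be any function. Let ε ≥ 0 and suppose u : [τ,∞) → L^p(ℝ^N,ρ) satisfies u(t,x) = e^{−(t−τ)} u_τ(x) + ∫_τ^t e^{−(t−s)} g(β(J*u)(s,x) + β h(s,u(s,x))) ds for all t ≥ τ, with ‖u_τ‖_{L^p(ℝ^N,ρ)} ≤ a + ε. Then ‖u(t)‖_{L^p(ℝ^N,ρ)} ≤ a + ε for every t ≥ τ (the ball of radius a +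 ε is positively invariant). -/
open MeasureTheory Set
open scoped ENNReal

noncomputable section

/-!
The variation-of-constants formula and `|g| ≤ a` give the pointwise bound
`|u(t,x)| ≤ e^{-(t-τ)} |u_τ(x)| + (1 - e^{-(t-τ)}) a`, the second term being `a` times the total
mass of the kernel `e^{-(t-s)}` on `[τ, t]`. Since `ρ dx` is a probability measure, a constant has
weighted `L^p` norm equal to itself, so Minkowski's inequality in `L^p(ρ dx)` turns the pointwise
bound into `‖u(t)‖ ≤ e^{-(t-τ)} (a + ε) + (1 - e^{-(t-τ)}) a ≤ a + ε`.
-/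

theorem integral_exp_neg_sub (τ t : ℝ) :
    ∫ s in τ..t, Real.exp (-(t - s)) = 1 - Real.exp (-(t - τ)) := by
  simp_rw [neg_sub]
  rw [intervalIntegral.integral_comp_sub_right (fun s => Real.exp s), integral_exp]
  simp

theorem abs_integral_exp_neg_sub_mul_le {τ t a : ℝ} (hτt : τ ≤ t) {f : ℝ → ℝ}
    (hf : ∀ s, |f s| ≤ a) :
    |∫ s in τ..t, Real.exp (-(t - s)) * f s| ≤ (1 - Real.exp (-(t - τ))) * a := by
  have hbound : ∀ s, ‖Real.exp (-(t - s)) * f s‖ ≤ a * Real.exp (-(t - s)) := fun s => by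
    rw [Real.norm_eq_abs, abs_mul, Real.abs_exp, mul_comm]
    exact mul_le_mul_of_nonneg_right (hf s) (Real.exp_pos _).le
  calc |∫ s in τ..t, Real.exp (-(t - s)) * f s|
      ≤ ∫ s in τ..t, a * Real.exp (-(t - s)) :=
        intervalIntegral.norm_integral_le_of_norm_le hτt (.of_forall fun s _ => hbound s)
          (by apply Continuous.intervalIntegrable; fun_prop)
    _ = (1 - Real.exp (-(t - τ))) * a := by
        rw [intervalIntegral.integral_const_mul, integral_exp_neg_sub, mul_comm]

theorem IsSolution.abs_le {N : ℕ} {J : Euc N → ℝ} {g : ℝ → ℝ} {h : ℝ → ℝ → ℝ} {β τ a : ℝ}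
    {uτ : Euc N → ℝ} {u : ℝ → Euc N → ℝ} (hsol : IsSolution J g h β τ uτ u)
    (hga : ∀ s, |g s| ≤ a) {t : ℝ} (ht : τ ≤ t) (x : Euc N) :
    |u t x| ≤ Real.exp (-(t - τ)) * |uτ x| + (1 - Real.exp (-(t - τ))) * a := by
  rw [hsol t ht x]
  refine (abs_add_le _ _).trans
    (add_le_add ?_ (abs_integral_exp_neg_sub_mul_le ht fun s => hga _))
  rw [abs_mul, Real.abs_exp]

def weightedMeasure {N : ℕ} (ρ : Euc N → ℝ) : Measure (Euc N) :=
  volume.withDensity fun x => ENNReal.ofReal (ρ x)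

section weightedMeasure

variable {N : ℕ} {p : ℝ} {ρ : Euc N → ℝ}

theorem isProbabilityMeasure_weightedMeasure (hρ : ∀ x, 0 ≤ ρ x) (hρ1 : ∫ x, ρ x = 1) :
    IsProbabilityMeasure (weightedMeasure ρ) := by
  constructor
  have hρi : Integrable ρ := .of_integral_ne_zero (by simp [hρ1])
  rw [weightedMeasure, withDensity_apply _ MeasurableSet.univ, setLIntegral_univ,
    ← ofReal_integral_eq_lintegral_ofReal hρi (.of_forall hρ), hρ1, ENNReal.ofReal_one]

theorem eLpNorm_weightedMeasure (hρ : ∀ x, 0 ≤ ρ x) (hρm : AEMeasurable ρ) (hp : 0 < p)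
    (v : Euc N → ℝ) :
    eLpNorm v (.ofReal p) (weightedMeasure ρ) =
      (∫⁻ x, ENNReal.ofReal (ρ x * |v x| ^ p)) ^ (1 / p) := by
  rw [eLpNorm_eq_lintegral_rpow_enorm_toReal (by simpa using hp) ENNReal.ofReal_ne_top,
    ENNReal.toReal_ofReal hp.le, weightedMeasure,
    lintegral_withDensity_eq_lintegral_mul_non_measurable₀ _ hρm.ennreal_ofReal
      (.of_forall fun _ => ENNReal.ofReal_lt_top)]
  congr 2 with x
  rw [Pi.mul_apply, ENNReal.ofReal_mul (hρ x),
    ← ENNReal.ofReal_rpow_of_nonneg (abs_nonneg _) hp.le, Real.enorm_eq_ofReal_abs]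

theorem ofReal_wnorm_le_eLpNorm (hρ : ∀ x, 0 ≤ ρ x) (hρm : AEMeasurable ρ) (hp : 0 < p)
    (v : Euc N → ℝ) :
    ENNReal.ofReal (wnorm p ρ v) ≤ eLpNorm v (.ofReal p) (weightedMeasure ρ) := by
  have hnn : ∀ x, 0 ≤ ρ x * |v x| ^ p := fun x => mul_nonneg (hρ x) (by positivity)
  rw [eLpNorm_weightedMeasure hρ hρm hp, wnorm,
    ← ENNReal.ofReal_rpow_of_nonneg (integral_nonneg hnn) (by positivity)]
  gcongr
  calc ENNReal.ofReal (∫ x, ρ x * |v x| ^ p)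
      = ‖∫ x, ρ x * |v x| ^ p‖ₑ := (Real.enorm_of_nonneg (integral_nonneg hnn)).symm
    _ ≤ ∫⁻ x, ‖ρ x * |v x| ^ p‖ₑ := enorm_integral_le_lintegral_enorm _
    _ = ∫⁻ x, ENNReal.ofReal (ρ x * |v x| ^ p) := by simp_rw [Real.enorm_of_nonneg (hnn _)]

theorem MemWLp.eLpNorm_eq {v : Euc N → ℝ} (hv : MemWLp p ρ v) (hρ : ∀ x, 0 ≤ ρ x)
    (hρm : AEMeasurable ρ) (hp : 0 < p) :
    eLpNorm v (.ofReal p) (weightedMeasure ρ) = ENNReal.ofReal (wnorm p ρ v) := by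
  have hnn : ∀ x, 0 ≤ ρ x * |v x| ^ p := fun x => mul_nonneg (hρ x) (by positivity)
  rw [eLpNorm_weightedMeasure hρ hρm hp, wnorm,
    ← ENNReal.ofReal_rpow_of_nonneg (integral_nonneg hnn) (by positivity),
    ofReal_integral_eq_lintegral_ofReal hv.2 (.of_forall hnn)]

theorem wnorm_le_of_abs_le_mul_add (hρ : ∀ x, 0 ≤ ρ x) (hρ1 : ∫ x, ρ x = 1) (hp : 1 ≤ p)
    {v w : Euc N → ℝ} (hw : MemWLp p ρ w) {c d : ℝ} (hc : 0 ≤ c) (hd : 0 ≤ d)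
    (hvw : ∀ x, |v x| ≤ c * |w x| + d) :
    wnorm p ρ v ≤ c * wnorm p ρ w + d := by
  have hp0 : 0 < p := one_pos.trans_le hp
  have hρm : AEMeasurable ρ := (Integrable.of_integral_ne_zero (by simp [hρ1])).aemeasurable
  have := isProbabilityMeasure_weightedMeasure hρ hρ1
  have hwm : AEStronglyMeasurable (fun x => ‖w x‖) (weightedMeasure ρ) :=
    (hw.1.mono_ac (withDensity_absolutelyContinuous _ _)).norm
  have hwnorm : 0 ≤ wnorm p ρ w :=
    Real.rpow_nonneg (integral_nonneg fun x => mul_nonneg (hρ x) (by positivity)) _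
  rw [← ENNReal.ofReal_le_ofReal_iff (by positivity)]
  calc ENNReal.ofReal (wnorm p ρ v)
      ≤ eLpNorm v (.ofReal p) (weightedMeasure ρ) := ofReal_wnorm_le_eLpNorm hρ hρm hp0 v
    _ ≤ eLpNorm (c • (fun x => ‖w x‖) + fun _ => d) (.ofReal p) (weightedMeasure ρ) :=
        eLpNorm_mono_real fun x => by simpa using hvw x
    _ ≤ eLpNorm (c • fun x => ‖w x‖) (.ofReal p) (weightedMeasure ρ) +
          eLpNorm (fun _ => d) (.ofReal p) (weightedMeasure ρ) :=
        eLpNorm_add_le (hwm.const_smul c) aestronglyMeasurable_const (by simpa using hp)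
    _ = ENNReal.ofReal (c * wnorm p ρ w + d) := by
        rw [eLpNorm_const_smul, eLpNorm_norm, hw.eLpNorm_eq hρ hρm hp0,
          eLpNorm_const' _ (by simpa using hp0) ENNReal.ofReal_ne_top, measure_univ,
          ENNReal.one_rpow, mul_one, Real.enorm_of_nonneg hc, Real.enorm_of_nonneg hd,
          ← ENNReal.ofReal_mul hc, ← ENNReal.ofReal_add (by positivity) hd]

end weightedMeasure

theorem stmt9_general {N : ℕ} (p : ℝ) (hp : 1 ≤ p)
    (ρ : Euc N → ℝ) (hρpos : ∀ x, 0 < ρ x) (hρ1 : ∫ x, ρ x = 1)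
    (β : ℝ)
    (J : Euc N → ℝ)
    (g : ℝ → ℝ) (a : ℝ) (hga : ∀ s, |g s| ≤ a)
    (h : ℝ → ℝ → ℝ)
    (ε : ℝ) (hε : 0 ≤ ε)
    (τ : ℝ) (uτ : Euc N → ℝ) (huτ : MemWLp p ρ uτ) (huτr : wnorm p ρ uτ ≤ a + ε)
    (u : ℝ → Euc N → ℝ) (hsol : IsSolution J g h β τ uτ u) :
    ∀ t ≥ τ, wnorm p ρ (u t) ≤ a + ε := by
  intro t ht
  have ha : 0 ≤ a := (abs_nonneg _).trans (hga 0)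
  set c := Real.exp (-(t - τ))
  have hc0 : 0 ≤ c := (Real.exp_pos _).le
  have hc1 : c ≤ 1 := Real.exp_le_one_iff.mpr (by linarith)
  calc wnorm p ρ (u t) ≤ c * wnorm p ρ uτ + (1 - c) * a :=
        wnorm_le_of_abs_le_mul_add (fun x => (hρpos x).le) hρ1 hp huτ hc0
          (mul_nonneg (by linarith) ha) (hsol.abs_le hga ht)
    _ ≤ c * (a + ε) + (1 - c) * a := by gcongr
    _ = a + c * ε := by ring
    _ ≤ a + ε := by gcongr; exact mul_le_of_le_one_left hε hc1

theorem stmt9 {N : ℕ} (p : ℝ) (hp : 1 ≤ p)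
    (ρ : Euc N → ℝ) (hρc : Continuous ρ) (hρpos : ∀ x, 0 < ρ x) (hρ1 : ∫ x, ρ x = 1)
    (β : ℝ) (hβ : 0 < β)
    (J : Euc N → ℝ) (hJnn : ∀ x, 0 ≤ J x) (hJm : Measurable J)
    (hJsupp : ∀ x : Euc N, 1 < ‖x‖ → J x = 0) (hJ1 : ∫ x, J x = 1)
    (g : ℝ → ℝ) (hgm : Measurable g) (a : ℝ) (hga : ∀ s, |g s| ≤ a)
    (h : ℝ → ℝ → ℝ)
    (ε : ℝ) (hε : 0 ≤ ε)
    (τ : ℝ) (uτ : Euc N → ℝ) (huτ : MemWLp p ρ uτ) (huτr : wnorm p ρ uτ ≤ a + ε)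
    (u : ℝ → Euc N → ℝ) (hsol : IsSolution J g h β τ uτ u) :
    ∀ t ≥ τ, wnorm p ρ (u t) ≤ a + ε :=
  stmt9_general p hp ρ hρpos hρ1 β J g a hga h ε hε τ uτ huτ huτr u hsol
end
end

section
/- Let β > 0, let J ∈ C¹(ℝ^N) be nonnegative, even, supported in the closed unit ball with ∫ J = 1, let g ∈ C¹(ℝ) satisfy |g(s)| ≤ a for all s with g' globally Lipschitz with constant k₁ and k₂ := |g'(0)|, and let h : ℝ → [0,h*) be continuous. Suppose u : ℝ×ℝ^N → ℝ is measurable and satisfies, for all (t,x), u(t,x) = ∫_{−∞}^t e^{−(t−s)} g(β(J*u)(s,x) + β h(s)) ds. Then for each t ∈ ℝ the function x ↦ u(t,x) is continuously differentiable, and for every i = 1,…,N and all (t,x), |∂_{x_i} u(t,x)| ≤ a β ‖∂_i J‖_{L^1(ℝ^N)} (k₁ β (a + h*) + k₂). In particular, every section of the pullback attractor is a bounded set in C¹. -/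
open MeasureTheory Set
open scoped ENNReal

noncomputable section

/-- The `i`-th partial derivative of `J`. -/
def pderiv {N : ℕ} (J : Euc N → ℝ) (i : Fin N) (y : Euc N) : ℝ :=
  fderiv ℝ J y (EuclideanSpace.single i (1 : ℝ))

/-!
Differentiate the integral identity in `x` under both integrals. Because `J` is `C¹` with compact
support, `J * v` is `C¹` for every bounded measurable `v`, with `∂ᵢ(J * v) = (∂ᵢJ) * v`, so
`|∂ᵢ(J * v)| ≤ ‖v‖_∞ ‖∂ᵢJ‖_{L¹}`. The identity itself gives `|u| ≤ a`, hence `|J * u| ≤ a`, so the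
argument of `g` stays in `[-β(a + h*), β(a + h*)]`, where the Lipschitz bound on `g'` gives
`|g'| ≤ k₁β(a + h*) + k₂`. These bounds are uniform in time, so differentiation under the time
integral is dominated by a multiple of `e^{-(t-s)}`, whose integral over `(-∞, t]` is `1`.
-/

open scoped Convolution

section ExpKernel

variable {G : Type*} [NormedAddCommGroup G] [NormedSpace ℝ G] (t : ℝ)

lemma exp_neg_sub_eq : (fun s => Real.exp (-(t - s))) = fun s => Real.exp s * Real.exp (-t) := by
  funext s
  rw [← Real.exp_add, neg_sub, sub_eq_add_neg]

lemma integrableOn_exp_neg_sub_Iic : IntegrableOn (fun s => Real.exp (-(t - s))) (Iic t) := by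
  rw [exp_neg_sub_eq]
  exact (integrableOn_exp_Iic t).mul_const _

lemma integral_exp_neg_sub_Iic : ∫ s in Iic t, Real.exp (-(t - s)) = 1 := by
  rw [exp_neg_sub_eq, integral_mul_const, integral_exp_Iic, ← Real.exp_add, add_neg_cancel,
    Real.exp_zero]

variable {t}

lemma norm_exp_neg_sub_smul_le {s C : ℝ} {y : G} (hy : ‖y‖ ≤ C) :
    ‖Real.exp (-(t - s)) • y‖ ≤ Real.exp (-(t - s)) * C := by
  rw [norm_smul, Real.norm_of_nonneg (Real.exp_pos _).le]
  exact mul_le_mul_of_nonneg_left hy (Real.exp_pos _).le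

lemma norm_integral_exp_neg_sub_smul_le {f : ℝ → G} {C : ℝ} (hf : ∀ s, ‖f s‖ ≤ C) :
    ‖∫ s in Iic t, Real.exp (-(t - s)) • f s‖ ≤ C := by
  calc ‖∫ s in Iic t, Real.exp (-(t - s)) • f s‖
      ≤ ∫ s in Iic t, Real.exp (-(t - s)) * C :=
        norm_integral_le_of_norm_le ((integrableOn_exp_neg_sub_Iic t).mul_const C)
          (Filter.Eventually.of_forall fun s => norm_exp_neg_sub_smul_le (hf s))
    _ = C := by rw [integral_mul_const, integral_exp_neg_sub_Iic, one_mul]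

lemma integrableOn_exp_neg_sub_smul {f : ℝ → G} {C : ℝ} (hfm : StronglyMeasurable f)
    (hf : ∀ s, ‖f s‖ ≤ C) : IntegrableOn (fun s => Real.exp (-(t - s)) • f s) (Iic t) :=
  (integrableOn_exp_neg_sub_Iic t).smul_of_top_left
    (memLp_top_of_bound hfm.aestronglyMeasurable C (Filter.Eventually.of_forall hf))

end ExpKernel

section DifferentiationUnderKernel

variable {E G : Type*} [NormedAddCommGroup E] [NormedSpace ℝ E]
  [NormedAddCommGroup G] [NormedSpace ℝ G] {t A B : ℝ} {F : ℝ → E → G} {F' : ℝ → E → E →L[ℝ] G}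

lemma hasFDerivAt_integral_exp_neg_sub_smul (hFm : ∀ x, StronglyMeasurable fun s => F s x)
    (hF'm : ∀ x, StronglyMeasurable fun s => F' s x) (hFb : ∀ s x, ‖F s x‖ ≤ A)
    (hF'b : ∀ s x, ‖F' s x‖ ≤ B) (hF : ∀ s x, HasFDerivAt (F s) (F' s x) x) (x₀ : E) :
    HasFDerivAt (fun x => ∫ s in Iic t, Real.exp (-(t - s)) • F s x)
      (∫ s in Iic t, Real.exp (-(t - s)) • F' s x₀) x₀ := by
  exact hasFDerivAt_integral_of_dominated_of_fderiv_le (Metric.ball_mem_nhds x₀ zero_lt_one)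
    (bound := fun s => Real.exp (-(t - s)) * B)
    (Filter.Eventually.of_forall fun x => (integrableOn_exp_neg_sub_smul (hFm x) (hFb · x)).1)
    (integrableOn_exp_neg_sub_smul (hFm x₀) (hFb · x₀))
    (integrableOn_exp_neg_sub_smul (hF'm x₀) (hF'b · x₀)).1
    (Filter.Eventually.of_forall fun s x _ => norm_exp_neg_sub_smul_le (hF'b s x))
    ((integrableOn_exp_neg_sub_Iic t).mul_const B)
    (Filter.Eventually.of_forall fun s x _ => (hF s x).const_smul _)

lemma continuous_integral_exp_neg_sub_smul {X : Type*} [TopologicalSpace X]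
    [FirstCountableTopology X] {f : ℝ → X → G} (hfm : ∀ x, StronglyMeasurable fun s => f s x)
    (hfb : ∀ s x, ‖f s x‖ ≤ B) (hfc : ∀ s, Continuous (f s)) :
    Continuous fun x => ∫ s in Iic t, Real.exp (-(t - s)) • f s x :=
  continuous_of_dominated (bound := fun s => Real.exp (-(t - s)) * B)
    (fun x => (integrableOn_exp_neg_sub_smul (hfm x) (hfb · x)).1)
    (fun x => Filter.Eventually.of_forall fun s => norm_exp_neg_sub_smul_le (hfb s x))
    ((integrableOn_exp_neg_sub_Iic t).mul_const B)
    (Filter.Eventually.of_forall fun s => (hfc s).const_smul _)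

lemma contDiff_integral_exp_neg_sub_smul (hFm : ∀ x, StronglyMeasurable fun s => F s x)
    (hF'm : ∀ x, StronglyMeasurable fun s => F' s x) (hFb : ∀ s x, ‖F s x‖ ≤ A)
    (hF'b : ∀ s x, ‖F' s x‖ ≤ B) (hF : ∀ s x, HasFDerivAt (F s) (F' s x) x)
    (hF'c : ∀ s, Continuous (F' s)) :
    ContDiff ℝ 1 fun x => ∫ s in Iic t, Real.exp (-(t - s)) • F s x := by
  have hD := hasFDerivAt_integral_exp_neg_sub_smul (t := t) hFm hF'm hFb hF'b hF
  rw [contDiff_one_iff_fderiv]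
  refine ⟨fun x => (hD x).differentiableAt, ?_⟩
  rw [funext fun x => (hD x).fderiv]
  exact continuous_integral_exp_neg_sub_smul hF'm hF'b hF'c

lemma norm_fderiv_integral_exp_neg_sub_smul_apply_le
    (hFm : ∀ x, StronglyMeasurable fun s => F s x)
    (hF'm : ∀ x, StronglyMeasurable fun s => F' s x) (hFb : ∀ s x, ‖F s x‖ ≤ A)
    (hF'b : ∀ s x, ‖F' s x‖ ≤ B) (hF : ∀ s x, HasFDerivAt (F s) (F' s x) x) {e : E} {C : ℝ}
    (he : ∀ s x, ‖F' s x e‖ ≤ C) (x : E) :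
    ‖fderiv ℝ (fun x => ∫ s in Iic t, Real.exp (-(t - s)) • F s x) x e‖ ≤ C := by
  rw [(hasFDerivAt_integral_exp_neg_sub_smul hFm hF'm hFb hF'b hF x).fderiv,
    ContinuousLinearMap.integral_apply (integrableOn_exp_neg_sub_smul (hF'm x) (hF'b · x))]
  exact norm_integral_exp_neg_sub_smul_le (he · x)

end DifferentiationUnderKernel

lemma hasCompactSupport_of_forall_lt_norm {E F : Type*} [NormedAddCommGroup E] [ProperSpace E]
    [Zero F] {f : E → F} {R : ℝ} (hf : ∀ x, R < ‖x‖ → f x = 0) : HasCompactSupport f :=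
  HasCompactSupport.intro (isCompact_closedBall 0 R) fun x hx =>
    hf x (by simpa [Metric.mem_closedBall, dist_zero_right, not_le] using hx)

section Translation

variable {G E : Type*} [NormedAddCommGroup G] [MeasurableSpace G] [BorelSpace G]
  [NormedAddCommGroup E] [NormedSpace ℝ E] {μ : Measure G}

lemma norm_integral_smul_comp_sub_le [μ.IsAddLeftInvariant] [μ.IsNegInvariant] {v : G → ℝ}
    {f : G → E} {a : ℝ} (hf : Integrable f μ) (hv : ∀ y, |v y| ≤ a) (x : G) :
    ‖∫ y, v y • f (x - y) ∂μ‖ ≤ a * ∫ y, ‖f y‖ ∂μ := by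
  calc ‖∫ y, v y • f (x - y) ∂μ‖ ≤ ∫ y, a * ‖f (x - y)‖ ∂μ := by
        refine norm_integral_le_of_norm_le ((hf.comp_sub_left x).norm.const_mul a) ?_
        refine Filter.Eventually.of_forall fun y => ?_
        rw [norm_smul, Real.norm_eq_abs]
        exact mul_le_mul_of_nonneg_right (hv y) (norm_nonneg _)
    _ = a * ∫ y, ‖f y‖ ∂μ := by
        rw [integral_const_mul, integral_sub_left_eq_self (fun y => ‖f y‖) μ x]

lemma stronglyMeasurable_integral_smul_comp_sub [SecondCountableTopology G] [SFinite μ]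
    {α : Type*} [MeasurableSpace α] {u : α → G → ℝ}
    (hu : Measurable (Function.uncurry u)) {K : G → E} (hK : Continuous K) (x : G) :
    StronglyMeasurable fun s => ∫ y, u s y • K (x - y) ∂μ :=
  (hu.stronglyMeasurable.smul (hK.stronglyMeasurable.comp_measurable
    (measurable_const.sub measurable_snd))).integral_prod_right'

lemma integrable_smul_comp_sub [μ.IsAddLeftInvariant] [μ.IsNegInvariant] {v : G → ℝ}
    {f : G → E} {a : ℝ} (hf : Integrable f μ) (hvm : AEStronglyMeasurable v μ)
    (hv : ∀ y, |v y| ≤ a) (x : G) :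
    Integrable (fun y => v y • f (x - y)) μ :=
  (hf.comp_sub_left x).bdd_smul a hvm (Filter.Eventually.of_forall hv)

end Translation

section Convolution

variable {N : ℕ} {J v : Euc N → ℝ} {a : ℝ}

lemma conv_eq_convolution (J v : Euc N → ℝ) :
    conv J v = v ⋆[ContinuousLinearMap.lsmul ℝ ℝ] J := by
  funext x
  simp [conv, convolution_def, mul_comm]

lemma hasFDerivAt_conv (hJ : ContDiff ℝ 1 J) (hJc : HasCompactSupport J)
    (hv : LocallyIntegrable v) (x : Euc N) :
    HasFDerivAt (conv J v) (∫ y, v y • fderiv ℝ J (x - y)) x := by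
  have h := hJc.hasFDerivAt_convolution_right (ContinuousLinearMap.lsmul ℝ ℝ) hv hJ x
  simp only [convolution_def, ContinuousLinearMap.precompR_apply] at h
  rwa [conv_eq_convolution]

lemma contDiff_conv (hJ : ContDiff ℝ 1 J) (hJc : HasCompactSupport J) (hv : LocallyIntegrable v) :
    ContDiff ℝ 1 (conv J v) := by
  rw [conv_eq_convolution]
  exact hJc.contDiff_convolution_right _ hv hJ

lemma abs_conv_le (hJ : Continuous J) (hJc : HasCompactSupport J) (hJnn : ∀ x, 0 ≤ J x)
    (hJ1 : ∫ x, J x = 1) (hv : ∀ y, |v y| ≤ a) (x : Euc N) : |conv J v x| ≤ a := by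
  have hJv : conv J v x = ∫ y, v y • J (x - y) := by simp [conv, mul_comm]
  simpa [hJv, Real.norm_of_nonneg (hJnn _), hJ1] using
    norm_integral_smul_comp_sub_le (hJ.integrable_of_hasCompactSupport (μ := volume) hJc) hv x

lemma abs_mul_conv_add_mul_le (hJ : Continuous J) (hJc : HasCompactSupport J)
    (hJnn : ∀ x, 0 ≤ J x) (hJ1 : ∫ x, J x = 1) (hv : ∀ y, |v y| ≤ a) {β c R : ℝ} (hβ : 0 ≤ β)
    (hc : c ∈ Icc 0 R) (x : Euc N) : |β * conv J v x + β * c| ≤ β * (a + R) := by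
  have hconv := abs_le.mp (abs_conv_le hJ hJc hJnn hJ1 hv x)
  rw [abs_le]
  constructor <;> nlinarith [hc.1, hc.2]

lemma norm_fderiv_conv_le (hJ : ContDiff ℝ 1 J) (hJc : HasCompactSupport J)
    (hv : LocallyIntegrable v) (hvb : ∀ y, |v y| ≤ a) (x : Euc N) :
    ‖fderiv ℝ (conv J v) x‖ ≤ a * ∫ y, ‖fderiv ℝ J y‖ := by
  rw [(hasFDerivAt_conv hJ hJc hv x).fderiv]
  exact norm_integral_smul_comp_sub_le ((hJ.continuous_fderiv one_ne_zero)
    |>.integrable_of_hasCompactSupport (hJc.fderiv (𝕜 := ℝ))) hvb x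

lemma abs_fderiv_conv_apply_le (hJ : ContDiff ℝ 1 J) (hJc : HasCompactSupport J)
    (hvm : AEStronglyMeasurable v) (hvb : ∀ y, |v y| ≤ a) (x e : Euc N) :
    |fderiv ℝ (conv J v) x e| ≤ a * ∫ y, |fderiv ℝ J y e| := by
  have hJ' : Integrable (fderiv ℝ J) :=
    (hJ.continuous_fderiv one_ne_zero).integrable_of_hasCompactSupport (hJc.fderiv (𝕜 := ℝ))
  have hv : LocallyIntegrable v :=
    (memLp_top_of_bound hvm a (Filter.Eventually.of_forall hvb)).locallyIntegrable le_top
  rw [(hasFDerivAt_conv hJ hJc hv x).fderiv,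
    ContinuousLinearMap.integral_apply (integrable_smul_comp_sub hJ' hvm hvb x)]
  simpa using norm_integral_smul_comp_sub_le (hJ'.apply_continuousLinearMap e) hvb x

lemma hasFDerivAt_comp_conv {g : ℝ → ℝ} (hg : Differentiable ℝ g) (hJ : ContDiff ℝ 1 J)
    (hJc : HasCompactSupport J) (hv : LocallyIntegrable v) (β c : ℝ) (x : Euc N) :
    HasFDerivAt (fun x => g (β * conv J v x + c))
      ((deriv g (β * conv J v x + c) * β) • fderiv ℝ (conv J v) x) x := by
  have hconv := ((contDiff_conv hJ hJc hv).differentiable one_ne_zero x).hasFDerivAt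
  rw [← smul_smul]
  exact (hg _).hasDerivAt.comp_hasFDerivAt x ((hconv.const_mul β).add_const c)

lemma continuous_deriv_comp_conv_smul_fderiv {g : ℝ → ℝ} (hg : ContDiff ℝ 1 g)
    (hJ : ContDiff ℝ 1 J) (hJc : HasCompactSupport J) (hv : LocallyIntegrable v) (β c : ℝ) :
    Continuous fun x => (deriv g (β * conv J v x + c) * β) • fderiv ℝ (conv J v) x := by
  have hconv := contDiff_conv hJ hJc hv
  exact (((hg.continuous_deriv le_rfl).comp
    ((continuous_const.mul hconv.continuous).add continuous_const)).mul continuous_const).smul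
    (hconv.continuous_fderiv one_ne_zero)

variable {α : Type*} [MeasurableSpace α] {u : α → Euc N → ℝ}

lemma stronglyMeasurable_conv (hu : Measurable (Function.uncurry u)) (hJ : Continuous J)
    (x : Euc N) : StronglyMeasurable fun s => conv J (u s) x := by
  simpa [conv, mul_comm] using stronglyMeasurable_integral_smul_comp_sub (μ := volume) hu hJ x

lemma stronglyMeasurable_fderiv_conv (hu : Measurable (Function.uncurry u))
    (hJ : ContDiff ℝ 1 J) (hJc : HasCompactSupport J) (hv : ∀ s, LocallyIntegrable (u s))
    (x : Euc N) : StronglyMeasurable fun s => fderiv ℝ (conv J (u s)) x := by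
  simp_rw [fun s => (hasFDerivAt_conv hJ hJc (hv s) x).fderiv]
  exact stronglyMeasurable_integral_smul_comp_sub hu (hJ.continuous_fderiv one_ne_zero) x

lemma measurable_mul_conv_add (hu : Measurable (Function.uncurry u)) (hJ : Continuous J)
    {c : α → ℝ} (hc : Measurable c) (β : ℝ) (x : Euc N) :
    Measurable fun s => β * conv J (u s) x + β * c s :=
  (measurable_const.mul (stronglyMeasurable_conv hu hJ x).measurable).add
    (measurable_const.mul hc)

end Convolution

lemma abs_le_of_abs_sub_le_mul {f : ℝ → ℝ} {k R s : ℝ}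
    (hf : ∀ s₁ s₂, |f s₁ - f s₂| ≤ k * |s₁ - s₂|) (hs : |s| ≤ R) : |f s| ≤ k * R + |f 0| := by
  have hk : 0 ≤ k := by simpa using (abs_nonneg _).trans (hf 1 0)
  have hs0 := hf s 0
  rw [sub_zero] at hs0
  linarith [abs_sub_abs_le_abs_sub (f s) (f 0), mul_le_mul_of_nonneg_left hs hk]

lemma norm_mul_smul_le {E : Type*} [SeminormedAddCommGroup E] [NormedSpace ℝ E]
    {d β M B : ℝ} {y : E} (hd : |d| ≤ M) (hβ : 0 ≤ β) (hy : ‖y‖ ≤ B) :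
    ‖(d * β) • y‖ ≤ M * β * B := by
  rw [norm_smul, norm_mul, Real.norm_of_nonneg hβ, Real.norm_eq_abs]
  exact mul_le_mul (mul_le_mul_of_nonneg_right hd hβ) hy (norm_nonneg _)
    (mul_nonneg ((abs_nonneg _).trans hd) hβ)

end

theorem stmt13_general {N : ℕ} (β : ℝ) (hβ : 0 < β)
    (J : Euc N → ℝ) (hJC1 : ContDiff ℝ 1 J) (hJnn : ∀ x, 0 ≤ J x)
    (hJsupp : ∀ x : Euc N, 1 < ‖x‖ → J x = 0) (hJ1 : ∫ x, J x = 1)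
    (g : ℝ → ℝ) (hgC1 : ContDiff ℝ 1 g) (a : ℝ) (hga : ∀ s, |g s| ≤ a)
    (k₁ : ℝ) (hg'Lip : ∀ s₁ s₂, |deriv g s₁ - deriv g s₂| ≤ k₁ * |s₁ - s₂|)
    (k₂ : ℝ) (hk₂ : k₂ = |deriv g 0|)
    (hstar : ℝ) (h : ℝ → ℝ) (hhc : Continuous h) (hh : ∀ t, h t ∈ Ico (0 : ℝ) hstar)
    (u : ℝ → Euc N → ℝ) (hum : Measurable (Function.uncurry u))
    (hsol : ∀ t x, u t x =
      ∫ s in Iic t, Real.exp (-(t - s)) * g (β * conv J (u s) x + β * h s)) :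
    ∀ t : ℝ, ContDiff ℝ 1 (u t) ∧
      ∀ i : Fin N, ∀ x : Euc N,
        |fderiv ℝ (u t) x (EuclideanSpace.single i (1 : ℝ))| ≤
          a * β * (∫ y, |pderiv J i y|) * (k₁ * β * (a + hstar) + k₂) := by
  have hJc : HasCompactSupport J := hasCompactSupport_of_forall_lt_norm hJsupp
  have hub : ∀ s x, |u s x| ≤ a := fun s x => by
    rw [hsol]
    exact norm_integral_exp_neg_sub_smul_le (f := fun σ => g (β * conv J (u σ) x + β * h σ))
      fun σ => hga _
  have hum' : ∀ s, Measurable (u s) := fun s => hum.comp measurable_prodMk_left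
  have hloc : ∀ s, LocallyIntegrable (u s) := fun s =>
    (memLp_top_of_bound (hum' s).aestronglyMeasurable a
      (Filter.Eventually.of_forall (hub s))).locallyIntegrable le_top
  set ξ : ℝ → Euc N → ℝ := fun s x => β * conv J (u s) x + β * h s
  set F' : ℝ → Euc N → Euc N →L[ℝ] ℝ := fun s x =>
    (deriv g (ξ s x) * β) • fderiv ℝ (conv J (u s)) x
  have hg' : ∀ s x, |deriv g (ξ s x)| ≤ k₁ * β * (a + hstar) + k₂ := fun s x => by
    rw [hk₂, mul_assoc]
    exact abs_le_of_abs_sub_le_mul hg'Lip (abs_mul_conv_add_mul_le hJC1.continuous hJc hJnn hJ1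
      (hub s) hβ.le (Ico_subset_Icc_self (hh s)) x)
  have hF : ∀ s x, HasFDerivAt (fun x => g (ξ s x)) (F' s x) x := fun s =>
    hasFDerivAt_comp_conv (hgC1.differentiable one_ne_zero) hJC1 hJc (hloc s) β (β * h s)
  have hξm := measurable_mul_conv_add hum hJC1.continuous hhc.measurable β
  have hFm : ∀ x, StronglyMeasurable fun s => g (ξ s x) := fun x =>
    (hgC1.continuous.measurable.comp (hξm x)).stronglyMeasurable
  have hF'm : ∀ x, StronglyMeasurable fun s => F' s x := fun x =>
    (((hgC1.continuous_deriv le_rfl).measurable.comp (hξm x)).mul_const β).stronglyMeasurable.smul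
      (stronglyMeasurable_fderiv_conv hum hJC1 hJc hloc x)
  have hF'b : ∀ s x, ‖F' s x‖ ≤ (k₁ * β * (a + hstar) + k₂) * β * (a * ∫ y, ‖fderiv ℝ J y‖) :=
    fun s x => norm_mul_smul_le (hg' s x) hβ.le (norm_fderiv_conv_le hJC1 hJc (hloc s) (hub s) x)
  intro t
  have hut : u t = fun x => ∫ s in Iic t, Real.exp (-(t - s)) • g (ξ s x) := funext (hsol t)
  refine ⟨hut ▸ contDiff_integral_exp_neg_sub_smul hFm hF'm (fun _ _ => hga _) hF'b hF
    fun s => continuous_deriv_comp_conv_smul_fderiv hgC1 hJC1 hJc (hloc s) β (β * h s),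
    fun i x => hut ▸ ?_⟩
  refine norm_fderiv_integral_exp_neg_sub_smul_apply_le hFm hF'm (fun _ _ => hga _) hF'b hF
    (fun s x => ?_) x
  rw [FunLike.coe_smul, Pi.smul_apply]
  refine (norm_mul_smul_le (hg' s x) hβ.le
    (abs_fderiv_conv_apply_le hJC1 hJc (hum' s).aestronglyMeasurable (hub s) x _)).trans_eq ?_
  simp only [pderiv]
  ring

theorem stmt13 {N : ℕ} (β : ℝ) (hβ : 0 < β)
    (J : Euc N → ℝ) (hJC1 : ContDiff ℝ 1 J) (hJnn : ∀ x, 0 ≤ J x)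
    (hJeven : ∀ x, J (-x) = J x)
    (hJsupp : ∀ x : Euc N, 1 < ‖x‖ → J x = 0) (hJ1 : ∫ x, J x = 1)
    (g : ℝ → ℝ) (hgC1 : ContDiff ℝ 1 g) (a : ℝ) (hga : ∀ s, |g s| ≤ a)
    (k₁ : ℝ) (hg'Lip : ∀ s₁ s₂, |deriv g s₁ - deriv g s₂| ≤ k₁ * |s₁ - s₂|)
    (k₂ : ℝ) (hk₂ : k₂ = |deriv g 0|)
    (hstar : ℝ) (h : ℝ → ℝ) (hhc : Continuous h) (hh : ∀ t, h t ∈ Ico (0 : ℝ) hstar)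
    (u : ℝ → Euc N → ℝ) (hum : Measurable (Function.uncurry u))
    (hsol : ∀ t x, u t x =
      ∫ s in Iic t, Real.exp (-(t - s)) * g (β * conv J (u s) x + β * h s)) :
    ∀ t : ℝ, ContDiff ℝ 1 (u t) ∧
      ∀ i : Fin N, ∀ x : Euc N,
        |fderiv ℝ (u t) x (EuclideanSpace.single i (1 : ℝ))| ≤
          a * β * (∫ y, |pderiv J i y|) * (k₁ * β * (a + hstar) + k₂) :=
  stmt13_general β hβ J hJC1 hJnn hJsupp hJ1 g hgC1 a hga k₁ hg'Lip k₂ hk₂ hstar h hhc hh u hum hsol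
end
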